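/- arXiv:1601.06996 — 6 statements merged into one kernel-verified Lean document; each statement's English description precedes it below -/
import Mathlib

section
/- Let X be the vertex set of a tree (a connected acyclic simple graph) with graph distance d. Let a, b, c be vertices of X such that a is adjacent to b, b is adjacent to c, and a ≠ c, and let k be a natural number. Then {y ∈ X : d(y,a) ≤ k+1 and d(y,a) ≡ k+1 (mod 2)} ∩ {y ∈ X : d(y,c) ≤ k+1 and d(y,c) ≡ k+1 (mod 2)} = {y ∈ X : d(y,b) ≤ k and d(y,b) ≡ k (mod 2)}. -/
open SimpleGraph

/-- In a tree, distances from any vertex to two adjacent vertices differ by exactly one. -/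
lemma tree_dist_adj_step {X : Type*} {G : SimpleGraph X} (hT : G.IsTree)
    {u v : X} (huv : G.Adj u v) (y : X) :
    G.dist y u = G.dist y v + 1 ∨ G.dist y v = G.dist y u + 1 := by
  classical
  obtain ⟨p, hp, hlen⟩ := hT.isConnected.exists_path_of_dist y u
  by_cases hv : v ∈ p.support
  · -- v lies on a geodesic from y to u, so d(y,u) = d(y,v) + 1
    left
    have hsplit := congrArg Walk.length (p.take_spec hv)
    rw [Walk.length_append] at hsplit
    have h1 : G.dist y v ≤ (p.takeUntil v hv).length := SimpleGraph.dist_le _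
    have h2 : 1 ≤ (p.dropUntil v hv).length := by
      by_contra h
      have : (p.dropUntil v hv).length = 0 := by omega
      exact huv.ne (Walk.eq_of_length_eq_zero this).symm
    have h3 : G.dist y u ≤ G.dist y v + 1 := by
      calc G.dist y u ≤ G.dist y v + G.dist v u :=
            hT.isConnected.dist_triangle
        _ ≤ G.dist y v + 1 := by
            have := SimpleGraph.dist_le (Walk.cons huv.symm Walk.nil : G.Walk v u)
            simp only [Walk.length_cons, Walk.length_nil] at this
            omega
    omega
  · -- extend the geodesic from y to u by the edge u-v
    right
    have hpath : (p.concat huv).IsPath := by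
      rw [← Walk.isPath_reverse_iff, Walk.reverse_concat]
      exact hp.reverse.cons (by
        rw [Walk.support_reverse, List.mem_reverse]; exact hv)
    obtain ⟨q, hq, hqlen⟩ := hT.isConnected.exists_path_of_dist y v
    have heq : p.concat huv = q := (hT.existsUnique_path y v).unique hpath hq
    have := congrArg Walk.length heq
    rw [Walk.length_concat, hlen, hqlen] at this
    omega

/-- In a tree, a vertex cannot be strictly farther from `b` than from two distinct
neighbours `a`, `c` of `b` simultaneously. -/
lemma tree_not_both_closer {X : Type*} {G : SimpleGraph X} (hT : G.IsTree)
    {a b c : X} (hab : G.Adj a b) (hcb : G.Adj c b) (hac : a ≠ c) (y : X)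
    (h1 : G.dist y b = G.dist y a + 1) (h2 : G.dist y b = G.dist y c + 1) : False := by
  obtain ⟨p, hp, hplen⟩ := hT.isConnected.exists_path_of_dist y a
  obtain ⟨q, hq, hqlen⟩ := hT.isConnected.exists_path_of_dist y c
  have hw1 : (p.concat hab).IsPath := by
    apply Walk.isPath_of_length_eq_dist
    rw [Walk.length_concat, hplen, h1]
  have hw2 : (q.concat hcb).IsPath := by
    apply Walk.isPath_of_length_eq_dist
    rw [Walk.length_concat, hqlen, h2]
  have heq : p.concat hab = q.concat hcb := (hT.existsUnique_path y b).unique hw1 hw2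
  have hsup := congrArg (fun w => w.reverse.support) heq
  simp only [Walk.reverse_concat, Walk.support_cons] at hsup
  have htails : p.reverse.support = q.reverse.support := by
    exact (List.cons.injEq _ _ _ _ ▸ hsup).2
  have ha : p.reverse.support.head? = some a := by
    rw [Walk.support_eq_cons]; rfl
  have hc : q.reverse.support.head? = some c := by
    rw [Walk.support_eq_cons]; rfl
  rw [htails, hc] at ha
  exact hac (Option.some.inj ha).symm

/-- In a tree, for three consecutive vertices `a, b, c` (with `a ≠ c`) and any `k`,
the intersection of the Hecke summation sets around `a` and `c` at level `k+1`
equals the summation set around `b` at level `k`. -/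
theorem tree_hecke_sets_inter {X : Type*} (G : SimpleGraph X) (hT : G.IsTree)
    (a b c : X) (hab : G.Adj a b) (hbc : G.Adj b c) (hac : a ≠ c) (k : ℕ) :
    {y : X | G.dist y a ≤ k + 1 ∧ G.dist y a % 2 = (k + 1) % 2} ∩
      {y : X | G.dist y c ≤ k + 1 ∧ G.dist y c % 2 = (k + 1) % 2} =
    {y : X | G.dist y b ≤ k ∧ G.dist y b % 2 = k % 2} := by
  ext y
  simp only [Set.mem_inter_iff, Set.mem_setOf_eq]
  have hstep_a := tree_dist_adj_step hT hab y
  have hstep_c := tree_dist_adj_step hT hbc.symm y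
  constructor
  · rintro ⟨⟨ha1, ha2⟩, ⟨hc1, hc2⟩⟩
    rcases hstep_a with ha | ha
    · -- d(y,a) = d(y,b) + 1
      constructor <;> omega
    · -- d(y,b) = d(y,a) + 1
      rcases hstep_c with hc | hc
      · constructor <;> omega
      · exact (tree_not_both_closer hT hab hbc.symm hac y ha hc).elim
  · rintro ⟨hb1, hb2⟩
    rcases hstep_a with ha | ha <;> rcases hstep_c with hc | hc <;>
      exact ⟨⟨by omega, by omega⟩, ⟨by omega, by omega⟩⟩
end

section
/- Let X be the vertex set of a tree (a connected acyclic simple graph) with graph distance d. Let a, b, c be vertices of X such that a is adjacent to b, b is adjacent to c, and a ≠ c, and let k be a natural number. Set R₁ = {y ∈ X : d(y,b) ≤ k+2, d(y,b) ≡ k+2 (mod 2)}, R₂ = {y ∈ X : d(y,a) ≤ k+1, d(y,a) ≡ k+1 (mod 2)}, and R₃ = {y ∈ X : d(y,c) ≤ k+1, d(y,c) ≡ k+1 (mod 2)}. Then R₁ \ (R₂ ∪ R₃) = {y ∈ X : d(y,b) = k+2, d(y,a) = k+3, and d(y,c) = k+3}. -/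
open SimpleGraph

/-- In a tree, every path has length equal to the distance between its endpoints. -/
lemma tree_path_length_eq_dist {X : Type*} {G : SimpleGraph X} (hT : G.IsTree)
    {u v : X} (p : G.Walk u v) (hp : p.IsPath) : p.length = G.dist u v := by
  obtain ⟨q, hq, hqlen⟩ := (hT.isConnected.1 u v).exists_path_of_dist
  have := hT.IsAcyclic.path_unique ⟨p, hp⟩ ⟨q, hq⟩
  rw [show p = q from congrArg Subtype.val this, hqlen]

/-- In a tree, distances to adjacent vertices differ by exactly one. -/
lemma tree_dist_adj {X : Type*} {G : SimpleGraph X} (hT : G.IsTree)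
    {a b : X} (hab : G.Adj a b) (y : X) :
    G.dist y a = G.dist y b + 1 ∨ G.dist y b = G.dist y a + 1 := by
  classical
  obtain ⟨p, hp, hplen⟩ := (hT.isConnected.1 y a).exists_path_of_dist
  by_cases hb : b ∈ p.support
  · left
    have hsplit := p.take_spec hb
    have hq : (p.takeUntil b hb).IsPath := hp.takeUntil hb
    have hr : (p.dropUntil b hb).IsPath := hp.dropUntil hb
    have hqlen := tree_path_length_eq_dist hT _ hq
    have hrlen := tree_path_length_eq_dist hT _ hr
    have hba : G.dist b a = 1 := SimpleGraph.dist_eq_one_iff_adj.mpr hab.symm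
    have := congrArg SimpleGraph.Walk.length hsplit
    rw [SimpleGraph.Walk.length_append, hqlen, hrlen, hba, hplen] at this
    omega
  · right
    have hrev : (SimpleGraph.Walk.cons hab.symm p.reverse).IsPath := by
      rw [SimpleGraph.Walk.cons_isPath_iff]
      exact ⟨hp.reverse, by rwa [SimpleGraph.Walk.support_reverse, List.mem_reverse]⟩
    have := tree_path_length_eq_dist hT _ hrev
    rw [SimpleGraph.Walk.length_cons, SimpleGraph.Walk.length_reverse, hplen,
      SimpleGraph.dist_comm (u := b) (v := y)] at this
    omega

/-- In a tree, for three consecutive vertices `a, b, c` (with `a ≠ c`) and any `k`,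
`R₁ \ (R₂ ∪ R₃)` is the set of vertices at distance `k+2` from `b` whose shortest
path to `b` avoids `a` and `c`. -/
theorem tree_hecke_sets_sdiff {X : Type*} (G : SimpleGraph X) (hT : G.IsTree)
    (a b c : X) (hab : G.Adj a b) (hbc : G.Adj b c) (hac : a ≠ c) (k : ℕ) :
    {y : X | G.dist y b ≤ k + 2 ∧ G.dist y b % 2 = (k + 2) % 2} \
      ({y : X | G.dist y a ≤ k + 1 ∧ G.dist y a % 2 = (k + 1) % 2} ∪
        {y : X | G.dist y c ≤ k + 1 ∧ G.dist y c % 2 = (k + 1) % 2}) =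
    {y : X | G.dist y b = k + 2 ∧ G.dist y a = k + 3 ∧ G.dist y c = k + 3} := by
  ext y
  have h1 := tree_dist_adj hT hab y
  have h2 := tree_dist_adj hT hbc.symm y
  simp only [Set.mem_diff, Set.mem_union, Set.mem_setOf_eq, not_or, not_and]
  constructor
  · rintro ⟨⟨hle, hpar⟩, hna, hnc⟩
    have hb2 : G.dist y b = k + 2 := by
      by_contra h
      have hble : G.dist y b ≤ k := by omega
      rcases h1 with h | h
      · exact absurd (by omega : G.dist y a % 2 = (k + 1) % 2) (by simpa using hna (by omega))
      · exact absurd (by omega : G.dist y a % 2 = (k + 1) % 2) (by simpa using hna (by omega))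
    have ha3 : G.dist y a = k + 3 := by
      rcases h1 with h | h
      · omega
      · exfalso; exact hna (by omega) (by omega)
    have hc3 : G.dist y c = k + 3 := by
      rcases h2 with h | h
      · omega
      · exfalso; exact hnc (by omega) (by omega)
    exact ⟨hb2, ha3, hc3⟩
  · rintro ⟨hb2, ha3, hc3⟩
    exact ⟨⟨by omega, by omega⟩, fun h => by omega, fun h => by omega⟩
end

section
/- Let X be the vertex set of a tree (a connected acyclic simple graph) with graph distance d. Let a, b, c be vertices of X such that a is adjacent to b, b is adjacent to c, and a ≠ c, and let k be a natural number. Then for every vertex y ∈ X, the following identity of integers holds: 𝟙[d(y,b) ≤ k+2 ∧ d(y,b) ≡ k+2 (mod 2)] − 𝟙[d(y,a) ≤ k+1 ∧ d(y,a) ≡ k+1 (mod 2)] − 𝟙[d(y,c) ≤ k+1 ∧ d(y,c) ≡ k+1 (mod 2)] + 𝟙[d(y,b) ≤ k ∧ d(y,b) ≡ k (mod 2)] = 𝟙[d(y,b) = k+2 ∧ d(y,a) = k+3 ∧ d(y,c) = k+3], where 𝟙[P] denotes the integer 1 if the condition P holds and 0 otherwise. -/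
open SimpleGraph

/-- A path `p` followed by an edge off its support is a path. -/
private lemma path_concat {X : Type*} {G : SimpleGraph X} {u v w : X} {p : G.Walk u v}
    (hp : p.IsPath) (h : G.Adj v w) (hw : w ∉ p.support) : (p.concat h).IsPath := by
  rw [← SimpleGraph.Walk.isPath_reverse_iff, SimpleGraph.Walk.reverse_concat,
    SimpleGraph.Walk.cons_isPath_iff, SimpleGraph.Walk.isPath_reverse_iff]
  exact ⟨hp, by simpa using hw⟩

/-- A geodesic to `u` cannot pass through a vertex strictly farther than `u`. -/
private lemma not_mem_geodesic {X : Type*} {G : SimpleGraph X} {y u v : X} {p : G.Walk y u}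
    (hlen : p.length = G.dist y u) (hv : G.dist y u < G.dist y v) : v ∉ p.support := by
  classical
  intro hmem
  have h1 : G.dist y v ≤ (p.takeUntil v hmem).length := SimpleGraph.dist_le _
  have h2 : (p.takeUntil v hmem).length ≤ p.length := SimpleGraph.Walk.length_takeUntil_le p hmem
  omega

private lemma eq_of_both_closer {X : Type*} {G : SimpleGraph X} (hT : G.IsTree)
    {a b c y : X} (hab : G.Adj a b) (hcb : G.Adj c b)
    (h1 : G.dist y a + 1 = G.dist y b) (h2 : G.dist y c + 1 = G.dist y b) : a = c := by
  obtain ⟨p, hp, hplen⟩ := hT.isConnected.exists_path_of_dist y a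
  obtain ⟨q, hq, hqlen⟩ := hT.isConnected.exists_path_of_dist y c
  have hbp : b ∉ p.support := not_mem_geodesic hplen (by omega)
  have hbq : b ∉ q.support := not_mem_geodesic hqlen (by omega)
  have hP : (p.concat hab).IsPath := path_concat hp hab hbp
  have hQ : (q.concat hcb).IsPath := path_concat hq hcb hbq
  have huniq := hT.IsAcyclic.path_unique ⟨p.concat hab, hP⟩ ⟨q.concat hcb, hQ⟩
  have heq : p.concat hab = q.concat hcb := congrArg Subtype.val huniq
  obtain ⟨hv, -⟩ := SimpleGraph.Walk.concat_inj heq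
  exact hv

/-- In a tree, distances to adjacent vertices are distinct. -/
private lemma dist_ne_of_adj {X : Type*} {G : SimpleGraph X} (hT : G.IsTree)
    {u v y : X} (h : G.Adj u v) : G.dist y u ≠ G.dist y v := by
  classical
  intro heq
  obtain ⟨p, hp, hplen⟩ := hT.isConnected.exists_path_of_dist y u
  obtain ⟨q, hq, hqlen⟩ := hT.isConnected.exists_path_of_dist y v
  have hvp : v ∉ p.support := by
    intro hmem
    have h1 : G.dist y v ≤ (p.takeUntil v hmem).length := SimpleGraph.dist_le _
    have h2 : (p.takeUntil v hmem).length + (p.dropUntil v hmem).length = p.length := by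
      rw [← SimpleGraph.Walk.length_append, SimpleGraph.Walk.take_spec]
    have h3 : (p.dropUntil v hmem).length ≠ 0 := fun h0 =>
      h.ne' (SimpleGraph.Walk.eq_of_length_eq_zero h0)
    omega
  have hP : (p.concat h).IsPath := path_concat hp h hvp
  have huniq := hT.IsAcyclic.path_unique ⟨p.concat h, hP⟩ ⟨q, hq⟩
  have heq3 : p.concat h = q := congrArg Subtype.val huniq
  have heq2 : (p.concat h).length = q.length := congrArg SimpleGraph.Walk.length heq3
  rw [SimpleGraph.Walk.length_concat] at heq2
  omega

/-- Pointwise indicator identity underlying the norm relation on the Bruhat–Tits tree. -/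
theorem tree_hecke_indicator_identity {X : Type*} (G : SimpleGraph X) (hT : G.IsTree)
    (a b c : X) (hab : G.Adj a b) (hbc : G.Adj b c) (hac : a ≠ c) (k : ℕ) (y : X) :
    (if G.dist y b ≤ k + 2 ∧ G.dist y b % 2 = (k + 2) % 2 then (1 : ℤ) else 0)
      - (if G.dist y a ≤ k + 1 ∧ G.dist y a % 2 = (k + 1) % 2 then (1 : ℤ) else 0)
      - (if G.dist y c ≤ k + 1 ∧ G.dist y c % 2 = (k + 1) % 2 then (1 : ℤ) else 0)
      + (if G.dist y b ≤ k ∧ G.dist y b % 2 = k % 2 then (1 : ℤ) else 0)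
    = (if G.dist y b = k + 2 ∧ G.dist y a = k + 3 ∧ G.dist y c = k + 3
        then (1 : ℤ) else 0) := by
  have hconn := hT.isConnected
  have hdab : G.dist a b = 1 := SimpleGraph.dist_eq_one_iff_adj.mpr hab
  have hdba : G.dist b a = 1 := SimpleGraph.dist_eq_one_iff_adj.mpr hab.symm
  have hdbc : G.dist b c = 1 := SimpleGraph.dist_eq_one_iff_adj.mpr hbc
  have hdcb : G.dist c b = 1 := SimpleGraph.dist_eq_one_iff_adj.mpr hbc.symm
  have t1 := hconn.dist_triangle (u := y) (v := b) (w := a)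
  have t2 := hconn.dist_triangle (u := y) (v := a) (w := b)
  have t3 := hconn.dist_triangle (u := y) (v := b) (w := c)
  have t4 := hconn.dist_triangle (u := y) (v := c) (w := b)
  rw [hdba] at t1; rw [hdab] at t2; rw [hdbc] at t3; rw [hdcb] at t4
  have hne1 : G.dist y a ≠ G.dist y b := dist_ne_of_adj hT hab
  have hne2 : G.dist y b ≠ G.dist y c := dist_ne_of_adj hT hbc
  have hcase1 : G.dist y a = G.dist y b + 1 ∨ G.dist y b = G.dist y a + 1 := by omega
  have hcase2 : G.dist y c = G.dist y b + 1 ∨ G.dist y b = G.dist y c + 1 := by omega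
  rcases hcase1 with h1 | h1 <;> rcases hcase2 with h2 | h2
  · split_ifs <;> omega
  · split_ifs <;> omega
  · split_ifs <;> omega
  · exact absurd (eq_of_both_closer hT (y := y) hab hbc.symm (by omega) (by omega)) hac
end

section
/- Let p be a prime, let V be a finite-dimensional vector space over ℚ_p, and let T be a ℤ_p-submodule of V (for the ℤ_p-module structure obtained by restriction of scalars) which is finitely generated over ℤ_p and spans V over ℚ_p. Let G be a group and ρ : G → (V ≃ₗ[ℚ_p] V) a group homomorphism such that ρ(g)(T) ⊆ T for every g ∈ G. If the only vector v ∈ V satisfying ρ(g) v = v for all g ∈ G is v = 0, then the image in the quotient V/T of the set {v ∈ V : ρ(g) v − v ∈ T for all g ∈ G} is a finite set. -/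
/-!
Put a norm on `V`. Then `T` is compact, being finitely generated over the compact ring `ℤ_p`,
and open, by Baire, since `V = ⋃ₖ p⁻ᵏ T`. The key point is that
`M = {v | ρ(g) v - v ∈ T for all g}` is bounded, `pᵏ M ⊆ T`: otherwise rescaling elements of `M`
gives, for every `k`, vectors of `p⁻¹T \ T` fixed by all `ρ(g)` modulo `pᵏ T`; these form a
decreasing sequence of nonempty compact sets, and a common point is a nonzero fixed vector.
Finally `M ⊆ p⁻ᵏ T`, which is compact and hence meets only finitely many cosets of the open `T`.
-/

open Filter Topology

instance PadicInt.continuousSMul {p : ℕ} [Fact p.Prime] : ContinuousSMul ℤ_[p] ℚ_[p] :=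
  continuousSMul_of_algebraMap _ _ continuous_subtype_val

theorem Padic.exists_norm_pow_mul_le_one {p : ℕ} [Fact p.Prime] (a : ℚ_[p]) :
    ∃ j : ℕ, ‖(p : ℚ_[p]) ^ j * a‖ ≤ 1 := by
  have hp : (1 : ℝ) < p := by exact_mod_cast (Fact.out : p.Prime).one_lt
  obtain ⟨j, hj⟩ := pow_unbounded_of_one_lt ‖a‖ hp
  refine ⟨j, ?_⟩
  rw [norm_mul, norm_pow, Padic.norm_p, inv_pow, inv_mul_le_iff₀ (by positivity), mul_one]
  exact hj.le

section Lattice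

variable {p : ℕ} [Fact p.Prime] {V : Type*} [AddCommGroup V] [Module ℚ_[p] V] [Module ℤ_[p] V]
  [IsScalarTower ℤ_[p] ℚ_[p] V] (T : Submodule ℤ_[p] V)

theorem Submodule.pow_smul_mem {x : V} (hx : x ∈ T) (n : ℕ) : (p : ℚ_[p]) ^ n • x ∈ T := by
  simpa [← algebraMap_smul ℚ_[p]] using T.smul_mem ((p : ℤ_[p]) ^ n) hx

theorem Submodule.pow_smul_mem_of_le {x : V} {k n : ℕ} (hx : (p : ℚ_[p]) ^ k • x ∈ T)
    (hkn : k ≤ n) : (p : ℚ_[p]) ^ n • x ∈ T := by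
  simpa [smul_smul, ← pow_add, Nat.sub_add_cancel hkn] using T.pow_smul_mem hx (n - k)

theorem Submodule.exists_pow_smul_mem_of_span_eq_top
    (hspan : Submodule.span ℚ_[p] (T : Set V) = ⊤) (v : V) :
    ∃ k : ℕ, (p : ℚ_[p]) ^ k • v ∈ T := by
  have hv : v ∈ Submodule.span ℚ_[p] (T : Set V) := hspan ▸ Submodule.mem_top
  induction hv using Submodule.span_induction with
  | mem x hx => exact ⟨0, by simpa using hx⟩
  | zero => exact ⟨0, by simp⟩
  | add x y _ _ hx hy =>
    obtain ⟨k, hk⟩ := hx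
    obtain ⟨l, hl⟩ := hy
    refine ⟨max k l, ?_⟩
    rw [smul_add]
    exact T.add_mem (T.pow_smul_mem_of_le hk (le_max_left k l))
      (T.pow_smul_mem_of_le hl (le_max_right k l))
  | smul a x _ hx =>
    obtain ⟨k, hk⟩ := hx
    obtain ⟨j, hj⟩ := Padic.exists_norm_pow_mul_le_one a
    refine ⟨j + k, ?_⟩
    let c : ℤ_[p] := ⟨_, hj⟩
    have h : (p : ℚ_[p]) ^ (j + k) • a • x = c • (p : ℚ_[p]) ^ k • x := by
      rw [← algebraMap_smul ℚ_[p] c, smul_smul, smul_smul, PadicInt.algebraMap_apply]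
      congr 1
      change _ = (p : ℚ_[p]) ^ j * a * _
      ring
    exact h ▸ T.smul_mem c hk

theorem Submodule.exists_pow_smul_notMem_and_pow_succ_smul_mem {v : V} {k j : ℕ}
    (hk : (p : ℚ_[p]) ^ k • v ∉ T) (hj : (p : ℚ_[p]) ^ j • v ∈ T) :
    ∃ n ≥ k, (p : ℚ_[p]) ^ n • v ∉ T ∧ (p : ℚ_[p]) ^ (n + 1) • v ∈ T := by
  suffices ∀ m, (p : ℚ_[p]) ^ (k + m) • v ∈ T →
      ∃ n ≥ k, (p : ℚ_[p]) ^ n • v ∉ T ∧ (p : ℚ_[p]) ^ (n + 1) • v ∈ T from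
    this j (T.pow_smul_mem_of_le hj (Nat.le_add_left j k))
  intro m hm
  induction m with
  | zero => exact absurd hm hk
  | succ m ih =>
    by_cases hkm : (p : ℚ_[p]) ^ (k + m) • v ∈ T
    · exact ih hkm
    · exact ⟨k + m, Nat.le_add_right k m, hkm, hm⟩

theorem Submodule.exists_notMem_fixed_mod_pow {ι : Type*} (f : ι → V →ₗ[ℚ_[p]] V)
    (hspan : Submodule.span ℚ_[p] (T : Set V) = ⊤) {v : V} (hv : ∀ i, f i v - v ∈ T) {k : ℕ}
    (hk : (p : ℚ_[p]) ^ k • v ∉ T) :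
    ∃ w, (p : ℚ_[p]) • w ∈ T ∧ w ∉ T ∧ ∀ i, ((p : ℚ_[p]) ^ k)⁻¹ • (f i w - w) ∈ T := by
  obtain ⟨j, hj⟩ := T.exists_pow_smul_mem_of_span_eq_top hspan v
  obtain ⟨n, hkn, hn, hn1⟩ := T.exists_pow_smul_notMem_and_pow_succ_smul_mem hk hj
  refine ⟨(p : ℚ_[p]) ^ n • v, by rwa [smul_smul, ← pow_succ'], hn, fun i => ?_⟩
  have h : ((p : ℚ_[p]) ^ k)⁻¹ • (f i ((p : ℚ_[p]) ^ n • v) - (p : ℚ_[p]) ^ n • v)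
      = (p : ℚ_[p]) ^ (n - k) • (f i v - v) := by
    rw [map_smul, ← smul_sub, smul_smul, pow_sub₀ _ (NeZero.ne _) hkn, mul_comm]
  exact h ▸ T.pow_smul_mem (hv i) (n - k)

end Lattice

section Normed

variable {p : ℕ} [Fact p.Prime] {V : Type*} [NormedAddCommGroup V] [NormedSpace ℚ_[p] V]

theorem eq_zero_of_forall_inv_pow_smul_mem {S : Set V} (hS : Bornology.IsBounded S)
    {x : V} (hx : ∀ k : ℕ, ((p : ℚ_[p]) ^ k)⁻¹ • x ∈ S) : x = 0 := by
  obtain ⟨C, hC⟩ := isBounded_iff_forall_norm_le.1 hS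
  have hp : (1 : ℝ) < p := by exact_mod_cast (Fact.out : p.Prime).one_lt
  have hbound : ∀ k : ℕ, ‖x‖ ≤ (p : ℝ)⁻¹ ^ k * C := fun k => by
    have hk := hC _ (hx k)
    rw [norm_smul, norm_inv, norm_pow, Padic.norm_p, inv_pow, inv_inv] at hk
    rwa [inv_pow, le_inv_mul_iff₀ (by positivity)]
  have hlim : Tendsto (fun k : ℕ => (p : ℝ)⁻¹ ^ k * C) atTop (𝓝 0) := by
    simpa using (tendsto_pow_atTop_nhds_zero_of_lt_one (by positivity)
      (inv_lt_one_of_one_lt₀ hp)).mul_const C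
  exact norm_le_zero_iff.1 (ge_of_tendsto' hlim hbound)

variable [Module ℤ_[p] V] (T : Submodule ℤ_[p] V)

theorem Submodule.finite_image_mk_of_pow_smul_mem (hTc : IsCompact (T : Set V))
    (hTo : IsOpen (T : Set V)) (k : ℕ) :
    (Submodule.Quotient.mk '' {v : V | (p : ℚ_[p]) ^ k • v ∈ T} : Set (V ⧸ T)).Finite := by
  have hK : IsCompact {v : V | (p : ℚ_[p]) ^ k • v ∈ T} :=
    (Homeomorph.smulOfNeZero _ (pow_ne_zero k (NeZero.ne _))).isCompact_preimage.2 hTc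
  obtain ⟨t, ht⟩ := compact_covered_by_add_left_translates hK
    (by rw [hTo.interior_eq]; exact ⟨0, T.zero_mem⟩)
  refine (t.finite_toSet.image fun g => Submodule.Quotient.mk (-g)).subset ?_
  rintro _ ⟨v, hv, rfl⟩
  obtain ⟨g, hg, hgv⟩ := Set.mem_iUnion₂.1 (ht hv)
  refine ⟨g, hg, (Submodule.Quotient.eq T).2 ?_⟩
  simpa [neg_sub_left, add_comm] using T.neg_mem hgv

variable [IsScalarTower ℤ_[p] ℚ_[p] V]

theorem Submodule.isOpen_of_span_eq_top [CompleteSpace V] (hT : IsClosed (T : Set V))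
    (hspan : Submodule.span ℚ_[p] (T : Set V) = ⊤) : IsOpen (T : Set V) := by
  have hcover : ⋃ k : ℕ, ((p : ℚ_[p]) ^ k • ·) ⁻¹' (T : Set V) = Set.univ :=
    Set.iUnion_eq_univ_iff.2 (T.exists_pow_smul_mem_of_span_eq_top hspan)
  obtain ⟨k, x, hx⟩ := nonempty_interior_of_iUnion_of_closed
    (fun k => hT.preimage (continuous_const_smul _)) hcover
  have hTx : (T : Set V) ∈ 𝓝 ((p : ℚ_[p]) ^ k • x) :=
    Filter.mem_of_superset
      ((Homeomorph.smulOfNeZero _ (pow_ne_zero k (NeZero.ne _))).isOpenMap.image_mem_nhds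
        (mem_interior_iff_mem_nhds.1 hx))
      (Set.image_preimage_subset _ _)
  exact T.toAddSubgroup.isOpen_of_mem_nhds hTx

theorem Submodule.exists_pow_smul_mem_of_forall_sub_mem [FiniteDimensional ℚ_[p] V]
    (hTc : IsCompact (T : Set V)) (hTo : IsOpen (T : Set V))
    (hspan : Submodule.span ℚ_[p] (T : Set V) = ⊤) {ι : Type*} (f : ι → V →ₗ[ℚ_[p]] V)
    (hfix : ∀ v, (∀ i, f i v = v) → v = 0) :
    ∃ k : ℕ, ∀ v, (∀ i, f i v - v ∈ T) → (p : ℚ_[p]) ^ k • v ∈ T := by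
  by_contra! hunb
  -- `S k = {w ∈ p⁻¹T \ T | f i w - w ∈ pᵏ T for all i}`
  let S (k : ℕ) : Set V :=
    {w | (p : ℚ_[p]) • w ∈ T ∧ w ∉ T ∧ ∀ i, ((p : ℚ_[p]) ^ k)⁻¹ • (f i w - w) ∈ T}
  have hS_antitone (k : ℕ) : S (k + 1) ⊆ S k := fun w ⟨h₁, h₂, h₃⟩ =>
    ⟨h₁, h₂, fun i => by
      simpa [smul_smul, pow_succ, mul_inv, mul_assoc, NeZero.ne (p : ℚ_[p])]
        using T.pow_smul_mem (h₃ i) 1⟩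
  have hS_nonempty (k : ℕ) : (S k).Nonempty := by
    obtain ⟨v, hv, hkv⟩ := hunb k
    exact T.exists_notMem_fixed_mod_pow f hspan hv hkv
  have hS_closed (k : ℕ) : IsClosed (S k) := by
    simp only [S, Set.ofPred_and, Set.ofPred_forall]
    exact (hTc.isClosed.preimage (continuous_const_smul _)).inter <| hTo.isClosed_compl.inter <|
      isClosed_iInter fun i => hTc.isClosed.preimage <|
        ((f i).continuous_of_finiteDimensional.sub continuous_id).const_smul _
  have hS_compact : IsCompact (S 0) :=
    ((Homeomorph.smulOfNeZero (p : ℚ_[p]) (NeZero.ne _)).isCompact_preimage.2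
      hTc).of_isClosed_subset (hS_closed 0) fun w hw => hw.1
  obtain ⟨w, hw⟩ := IsCompact.nonempty_iInter_of_sequence_nonempty_isCompact_isClosed S
    hS_antitone hS_nonempty hS_compact hS_closed
  rw [Set.mem_iInter] at hw
  have hw_fixed (i : ι) : f i w = w := sub_eq_zero.1 <|
    eq_zero_of_forall_inv_pow_smul_mem hTc.isBounded fun k => (hw k).2.2 i
  exact (hw 0).2.1 (hfix w hw_fixed ▸ T.zero_mem)

end Normed

theorem finiteness_of_fixed_points_in_quotient_general
    {p : ℕ} [Fact p.Prime] {V : Type*} [AddCommGroup V]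
    [Module ℚ_[p] V] [FiniteDimensional ℚ_[p] V]
    [Module ℤ_[p] V] [IsScalarTower ℤ_[p] ℚ_[p] V]
    (T : Submodule ℤ_[p] V) (hFG : T.FG)
    (hspan : Submodule.span ℚ_[p] (T : Set V) = ⊤)
    {G : Type*} [Group G] (ρ : G →* (V ≃ₗ[ℚ_[p]] V))
    (hfix : ∀ v : V, (∀ g : G, ρ g v = v) → v = 0) :
    (((Submodule.Quotient.mk : V → V ⧸ T)) ''
      {v : V | ∀ g : G, ρ g v - v ∈ T}).Finite := by
  let e := (Module.finBasis ℚ_[p] V).equivFun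
  let _ : NormedAddCommGroup V := NormedAddCommGroup.induced V _ e e.injective
  let _ : NormedSpace ℚ_[p] V := NormedSpace.induced ℚ_[p] V _ e
  have _ : CompleteSpace V := FiniteDimensional.complete ℚ_[p] V
  have _ : ContinuousSMul ℤ_[p] V := IsScalarTower.continuousSMul ℚ_[p]
  have hTc : IsCompact (T : Set V) := Submodule.isCompact_of_fg hFG
  have hTo : IsOpen (T : Set V) := T.isOpen_of_span_eq_top hTc.isClosed hspan
  obtain ⟨k, hk⟩ := T.exists_pow_smul_mem_of_forall_sub_mem hTc hTo hspan
    (fun g => (ρ g).toLinearMap) hfix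
  exact (T.finite_image_mk_of_pow_smul_mem hTc hTo k).subset (Set.image_mono hk)

/-- If `T` is a full `ℤ_p`-lattice in a finite-dimensional `ℚ_p`-vector space `V`,
stable under a group action `ρ` on `V` with no nonzero fixed vectors, then the image
in `V/T` of the set of `v` with `ρ(g)v − v ∈ T` for all `g` is finite. -/
theorem finiteness_of_fixed_points_in_quotient
    {p : ℕ} [Fact p.Prime] {V : Type*} [AddCommGroup V]
    [Module ℚ_[p] V] [FiniteDimensional ℚ_[p] V]
    [Module ℤ_[p] V] [IsScalarTower ℤ_[p] ℚ_[p] V]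
    (T : Submodule ℤ_[p] V) (hFG : T.FG)
    (hspan : Submodule.span ℚ_[p] (T : Set V) = ⊤)
    {G : Type*} [Group G] (ρ : G →* (V ≃ₗ[ℚ_[p]] V))
    (hstab : ∀ g : G, ∀ x ∈ T, ρ g x ∈ T)
    (hfix : ∀ v : V, (∀ g : G, ρ g v = v) → v = 0) :
    (((Submodule.Quotient.mk : V → V ⧸ T)) ''
      {v : V | ∀ g : G, ρ g v - v ∈ T}).Finite :=
  finiteness_of_fixed_points_in_quotient_general T hFG hspan ρ hfix
end

section
/- For every complex number s with Re(s) > 1/2, the integral ∫_ℝ (x² + 1)^{(1/2) − s}/(x + i) dx converges absolutely and equals −i·√π·Γ(s)/Γ(s + 1/2), where Γ denotes the complex Gamma function, i is the imaginary unit, and (x²+1)^{(1/2)−s} is the complex power of the positive real number x²+1. -/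
/-! Since `1 / (x + i) = (x - i) / (1 + x²)`, the integrand is `x G(x) - i G(x)` with
`G(x) = (1 + x²)^(-(s + 1/2))`. The first term is odd and integrates to zero. The even function `G`
becomes the Beta integral `B(s, 1/2) = Γ(s) Γ(1/2) / Γ(s + 1/2)` under the substitution
`t = 1 / (1 + x²)` on `(0, ∞)`, and `Γ(1/2) = √π`. -/

open MeasureTheory Set Complex

theorem integrable_one_add_sq_rpow_neg {r : ℝ} (hr : 1 / 2 < r) :
    Integrable fun x : ℝ => (1 + x ^ 2) ^ (-r) := by
  have := integrable_rpow_neg_one_add_norm_sq (E := ℝ) (μ := volume) (r := 2 * r)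
    (by simp; linarith)
  simpa [neg_div, mul_div_cancel_left₀] using this

theorem integrable_ofReal_one_add_sq_cpow {s : ℂ} (hs : 0 < s.re) :
    Integrable fun x : ℝ => ((1 + x ^ 2 : ℝ) : ℂ) ^ (-(s + 1 / 2)) := by
  refine (integrable_one_add_sq_rpow_neg (r := s.re + 1 / 2) (by linarith)).mono'
    (by fun_prop : Measurable _).aestronglyMeasurable (.of_forall fun x => ?_)
  rw [norm_cpow_eq_rpow_re_of_pos (by positivity)]
  simp

theorem ofReal_one_add_sq (x : ℝ) : ((1 + x ^ 2 : ℝ) : ℂ) = (x : ℂ) ^ 2 + 1 := by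
  push_cast; ring

theorem norm_ofReal_add_I (x : ℝ) : ‖(x : ℂ) + I‖ = √(1 + x ^ 2) := by
  simpa [add_comm] using norm_add_mul_I x 1

theorem ofReal_one_add_sq_eq_mul (x : ℝ) :
    ((1 + x ^ 2 : ℝ) : ℂ) = ((x : ℂ) + I) * ((x : ℂ) - I) := by
  rw [ofReal_one_add_sq]; ring_nf; rw [I_sq]; ring

theorem ofReal_add_I_ne_zero (x : ℝ) : (x : ℂ) + I ≠ 0 := by
  simp [Complex.ext_iff]

theorem one_add_sq_cpow_div_ofReal_add_I (x : ℝ) (w : ℂ) :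
    ((x : ℂ) ^ 2 + 1) ^ w / (x + I) = ((x : ℂ) - I) * ((1 + x ^ 2 : ℝ) : ℂ) ^ (w - 1) := by
  have hpos : ((1 + x ^ 2 : ℝ) : ℂ) ≠ 0 := ofReal_ne_zero.mpr (by positivity)
  rw [← ofReal_one_add_sq, cpow_sub _ _ hpos, cpow_one, mul_div, eq_div_iff hpos,
    div_mul_eq_mul_div, div_eq_iff (ofReal_add_I_ne_zero x), ofReal_one_add_sq_eq_mul]
  ring

theorem norm_one_add_sq_cpow_div_ofReal_add_I (x : ℝ) (w : ℂ) :
    ‖((x : ℂ) ^ 2 + 1) ^ w / (x + I)‖ = (1 + x ^ 2) ^ (w.re - 1 / 2) := by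
  have hpos : (0 : ℝ) < 1 + x ^ 2 := by positivity
  rw [norm_div, ← ofReal_one_add_sq, norm_cpow_eq_rpow_re_of_pos hpos, norm_ofReal_add_I,
    Real.sqrt_eq_rpow, ← Real.rpow_sub hpos]

theorem integrable_one_add_sq_cpow_div_ofReal_add_I {w : ℂ} (hw : w.re < 0) :
    Integrable fun x : ℝ => ((x : ℂ) ^ 2 + 1) ^ w / (x + I) := by
  refine (integrable_one_add_sq_rpow_neg (r := 1 / 2 - w.re) (by linarith)).mono'
    (by fun_prop : Measurable _).aestronglyMeasurable (.of_forall fun x => ?_)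
  rw [norm_one_add_sq_cpow_div_ofReal_add_I, neg_sub]

section Parity

variable {E : Type*} [NormedAddCommGroup E] [NormedSpace ℝ E] {f : ℝ → E}

theorem integral_eq_zero_of_odd (hf : ∀ x, f (-x) = -f x) : ∫ x, f x = 0 := by
  have : IsAddTorsionFree E := .of_isTorsionFree ℝ E
  have := integral_neg_eq_self f volume
  simp_rw [hf, integral_neg] at this
  exact self_eq_neg.mp this.symm

theorem integral_eq_two_smul_setIntegral_Ioi_of_even (hfi : Integrable f)
    (hf : ∀ x, f (-x) = f x) :
    ∫ x, f x = (2 : ℝ) • ∫ x in Ioi 0, f x := by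
  have hIic : ∫ x in Iic 0, f x = ∫ x in Ioi 0, f x := by
    simpa [hf] using (integral_comp_neg_Ioi 0 f).symm
  rw [← intervalIntegral.integral_Iic_add_Ioi hfi.integrableOn hfi.integrableOn, hIic, two_smul]

end Parity

theorem image_inv_one_add_sq_Ioi : (fun x : ℝ => (1 + x ^ 2)⁻¹) '' Ioi 0 = Ioo 0 1 := by
  ext t
  constructor
  · rintro ⟨x, hx, rfl⟩
    exact ⟨by positivity, inv_lt_one_of_one_lt₀ (by nlinarith [mem_Ioi.mp hx])⟩
  · rintro ⟨ht0, ht1⟩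
    have hpos : 0 < t⁻¹ - 1 := sub_pos.mpr (one_lt_inv₀ ht0 |>.mpr ht1)
    refine ⟨√(t⁻¹ - 1), Real.sqrt_pos.mpr hpos, ?_⟩
    simp [Real.sq_sqrt hpos.le]

theorem injOn_inv_one_add_sq_Ioi : InjOn (fun x : ℝ => (1 + x ^ 2)⁻¹) (Ioi 0) := by
  intro x hx y hy hxy
  simp only [inv_inj, add_right_inj] at hxy
  exact (pow_left_inj₀ (le_of_lt hx) (le_of_lt hy) two_ne_zero).mp hxy

theorem one_sub_inv_one_add_sq_cpow {x : ℝ} (hx : 0 < x) :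
    (1 - (((1 + x ^ 2)⁻¹ : ℝ) : ℂ)) ^ ((1 / 2 : ℂ) - 1)
      = ((1 + x ^ 2 : ℝ) : ℂ) ^ (1 / 2 : ℂ) / x := by
  have hr : (0 : ℝ) < 1 + x ^ 2 := by positivity
  have hsub :
      1 - (((1 + x ^ 2)⁻¹ : ℝ) : ℂ) = ((x ^ 2 : ℝ) : ℂ) / ((1 + x ^ 2 : ℝ) : ℂ) := by
    rw [← ofReal_one, ← ofReal_sub, ← ofReal_div]
    congr 1
    field_simp
    ring
  have hsq : ((x ^ 2 : ℝ) : ℂ) ^ (-(1 / 2) : ℂ) = (x : ℂ)⁻¹ := by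
    rw [show (-(1 / 2) : ℂ) = ((-(1 / 2) : ℝ) : ℂ) by push_cast; ring,
      ← ofReal_cpow (by positivity), ← Real.rpow_natCast, ← Real.rpow_mul hx.le]
    norm_num [Real.rpow_neg_one]
  rw [hsub, div_cpow_ofReal_nonneg (by positivity) hr.le,
    show (1 / 2 : ℂ) - 1 = -(1 / 2) by ring, hsq, cpow_neg]
  field_simp

theorem abs_deriv_smul_betaIntegrand {x : ℝ} (hx : 0 < x) (s : ℂ) :
    |-(2 * x) / (1 + x ^ 2) ^ 2| • ((((1 + x ^ 2)⁻¹ : ℝ) : ℂ) ^ (s - 1) *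
      (1 - (((1 + x ^ 2)⁻¹ : ℝ) : ℂ)) ^ ((1 / 2 : ℂ) - 1))
    = 2 * ((1 + x ^ 2 : ℝ) : ℂ) ^ (-(s + 1 / 2)) := by
  have hr : (0 : ℝ) < 1 + x ^ 2 := by positivity
  have hx' : (x : ℂ) ≠ 0 := ofReal_ne_zero.mpr hx.ne'
  rw [abs_div, abs_neg, abs_of_pos (by positivity), abs_of_pos (by positivity), real_smul,
    one_sub_inv_one_add_sq_cpow hx, ofReal_inv, inv_cpow_ofReal_nonneg hr.le, ofReal_div,
    ofReal_mul, ofReal_pow, ofReal_ofNat]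
  set r : ℂ := ((1 + x ^ 2 : ℝ) : ℂ)
  have hr' : r ≠ 0 := ofReal_ne_zero.mpr hr.ne'
  have hpow : (r ^ (s - 1))⁻¹ * r ^ (1 / 2 : ℂ) = r ^ (-(s + 1 / 2)) * r ^ 2 := by
    rw [← cpow_neg, ← cpow_add _ _ hr', ← cpow_natCast, ← cpow_add _ _ hr']
    ring_nf
  calc _ = 2 / r ^ 2 * ((r ^ (s - 1))⁻¹ * r ^ (1 / 2 : ℂ)) := by field_simp
    _ = _ := by rw [hpow]; field_simp

theorem betaIntegral_half_right_eq_two_mul_setIntegral_Ioi (s : ℂ) :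
    betaIntegral s (1 / 2) = 2 * ∫ x in Ioi 0, ((1 + x ^ 2 : ℝ) : ℂ) ^ (-(s + 1 / 2)) := by
  have hderiv : ∀ x ∈ Ioi (0 : ℝ), HasDerivWithinAt (fun x : ℝ => (1 + x ^ 2)⁻¹)
      (-(2 * x) / (1 + x ^ 2) ^ 2) (Ioi 0) x := fun x _ => by
    simpa using (((hasDerivAt_pow 2 x).const_add 1).fun_inv (by positivity)).hasDerivWithinAt
  rw [betaIntegral, intervalIntegral.integral_of_le zero_le_one, integral_Ioc_eq_integral_Ioo,
    ← image_inv_one_add_sq_Ioi,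
    integral_image_eq_integral_abs_deriv_smul measurableSet_Ioi hderiv injOn_inv_one_add_sq_Ioi,
    ← integral_const_mul]
  exact setIntegral_congr_fun measurableSet_Ioi fun x hx => abs_deriv_smul_betaIntegrand hx s

theorem integral_ofReal_one_add_sq_cpow {s : ℂ} (hs : 0 < s.re) :
    ∫ x : ℝ, ((1 + x ^ 2 : ℝ) : ℂ) ^ (-(s + 1 / 2))
      = Real.sqrt Real.pi * Gamma s / Gamma (s + 1 / 2) := by
  have hsqrt : ((Real.sqrt Real.pi : ℝ) : ℂ) = (Real.pi : ℂ) ^ (1 / 2 : ℂ) := by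
    rw [Real.sqrt_eq_rpow, ofReal_cpow Real.pi_pos.le]
    norm_num
  rw [integral_eq_two_smul_setIntegral_Ioi_of_even (integrable_ofReal_one_add_sq_cpow hs)
      fun x => by simp, real_smul, ofReal_ofNat,
    ← betaIntegral_half_right_eq_two_mul_setIntegral_Ioi,
    betaIntegral_eq_Gamma_mul_div _ _ hs (by norm_num), Gamma_one_half_eq, hsqrt]
  ring

/-- The archimedean Whittaker integral at `y = 0`: for `Re(s) > 1/2`,
`∫_ℝ (x²+1)^{1/2−s}/(x+i) dx` converges absolutely and equals
`−i√π·Γ(s)/Γ(s+1/2)`. -/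
theorem whittaker_integral_at_zero (s : ℂ) (hs : 1 / 2 < s.re) :
    MeasureTheory.Integrable
        (fun x : ℝ => ((x : ℂ) ^ 2 + 1) ^ ((1 / 2 : ℂ) - s) / (x + Complex.I)) ∧
    ∫ x : ℝ, ((x : ℂ) ^ 2 + 1) ^ ((1 / 2 : ℂ) - s) / (x + Complex.I)
      = -Complex.I * Real.sqrt Real.pi * Complex.Gamma s / Complex.Gamma (s + 1 / 2) := by
  set G : ℝ → ℂ := fun x => ((1 + x ^ 2 : ℝ) : ℂ) ^ (-(s + 1 / 2))
  have hsplit : ∀ x : ℝ,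
      ((x : ℂ) ^ 2 + 1) ^ ((1 / 2 : ℂ) - s) / (x + I) = x * G x - I * G x := fun x => by
    rw [one_add_sq_cpow_div_ofReal_add_I, show (1 / 2 : ℂ) - s - 1 = -(s + 1 / 2) by ring,
      sub_mul]
  have hf := integrable_one_add_sq_cpow_div_ofReal_add_I (w := 1 / 2 - s) (by simp; linarith)
  have hG : Integrable G := integrable_ofReal_one_add_sq_cpow (by linarith)
  have hxG : Integrable fun x : ℝ => x * G x :=
    (hf.add (hG.const_mul I)).congr
      (.of_forall fun x => by simp only [Pi.add_apply, hsplit]; ring)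
  refine ⟨hf, ?_⟩
  calc ∫ x : ℝ, ((x : ℂ) ^ 2 + 1) ^ ((1 / 2 : ℂ) - s) / (x + I)
      = (∫ x : ℝ, x * G x) - I * ∫ x : ℝ, G x := by
        simp_rw [hsplit]
        rw [integral_sub hxG (hG.const_mul I), integral_const_mul]
    _ = -I * Real.sqrt Real.pi * Gamma s / Gamma (s + 1 / 2) := by
        rw [integral_eq_zero_of_odd fun x => by simp [G],
          integral_ofReal_one_add_sq_cpow (by linarith)]
        ring
end

section
/- Let p be a prime and n ≥ 1 a natural number. The set K₁(pⁿ) of matrices [[a, b], [c, d]] in GL₂(ℤ_p) with c ∈ pⁿℤ_p and d − 1 ∈ pⁿℤ_p is a subgroup of GL₂(ℤ_p), and it is generated (as a subgroup) by the set consisting of all matrices of the four forms [[1, x], [0, 1]] with x ∈ ℤ_p, [[y, 0], [0, 1]] with y ∈ ℤ_p^×, [[1, 0], [0, d]] with d ∈ 1 + pⁿℤ_p, and [[1, 0], [a, 1]] with a ∈ pⁿℤ_p. -/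
/-!
Write `A = !![a, b; c, d]` with `m ∣ c` and `m ∣ d - 1`. Since `m` lies in the Jacobson radical
(for `ℤ_p` and `m = pⁿ`, `n ≥ 1`, this is the maximal ideal), `d` is a unit, and then
`A = !![1, b/d; 0, 1] * diag(det A / d, 1) * diag(1, d) * !![1, 0; c/d, 1]`,
a product of generators. That `K₁(m)` is a subgroup follows from the adjugate formula for `A⁻¹`.
-/

open Matrix

theorem Ideal.isUnit_of_dvd_sub_one_of_mem_jacobson_bot {R : Type*} [CommRing R] {m d : R}
    (hm : m ∈ (⊥ : Ideal R).jacobson) (hd : m ∣ d - 1) : IsUnit d :=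
  isUnit_of_sub_one_mem_jacobson_bot d (mem_of_dvd _ hd hm)

namespace Matrix.GeneralLinearGroup

variable {R : Type*} [CommRing R]

@[simps apply]
def lowerLeftHom : AddChar R (GL (Fin 2) R) where
  toFun x := ⟨!![1, 0; x, 1], !![1, 0; -x, 1], by simp [one_fin_two], by simp [one_fin_two]⟩
  map_zero_eq_one' := by simp [Units.ext_iff, one_fin_two]
  map_add_eq_mul' a b := by simp [Units.ext_iff, add_comm]

@[simps]
def diagonalFinTwo (u v : Rˣ) : GL (Fin 2) R :=
  ⟨!![(u : R), 0; 0, v], !![((u⁻¹ : Rˣ) : R), 0; 0, ((v⁻¹ : Rˣ) : R)],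
    by simp [one_fin_two], by simp [one_fin_two]⟩

def K1 (m : R) : Subgroup (GL (Fin 2) R) where
  carrier := {A | m ∣ A 1 0 ∧ m ∣ A 1 1 - 1}
  one_mem' := by simp
  mul_mem' {A B} := by
    rintro ⟨hA₁, hA₂⟩ ⟨hB₁, hB₂⟩
    simp only [Set.mem_ofPred_eq, Units.val_mul, mul_apply, Fin.sum_univ_two]
    refine ⟨dvd_add (hA₁.mul_right _) (hB₁.mul_left _), ?_⟩
    rw [show A 1 0 * B 0 1 + A 1 1 * B 1 1 - 1 =
      A 1 0 * B 0 1 + (A 1 1 - 1) * B 1 1 + (B 1 1 - 1) by ring]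
    exact dvd_add (dvd_add (hA₁.mul_right _) (hA₂.mul_right _)) hB₂
  inv_mem' {A} := by
    rintro ⟨h₁, h₂⟩
    set r := Ring.inverse (A : Matrix (Fin 2) (Fin 2) R).det
    have hdet : r * (A : Matrix (Fin 2) (Fin 2) R).det = 1 :=
      Ring.inverse_mul_cancel _ ((isUnit_iff_isUnit_det _).mp A.isUnit)
    simp only [Set.mem_ofPred_eq, coe_units_inv, inv_def, adjugate_fin_two, smul_apply, of_apply,
      cons_val', cons_val_zero, cons_val_one, cons_val_fin_one, smul_eq_mul]
    refine ⟨h₁.neg_right.mul_left r, ?_⟩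
    rw [det_fin_two] at hdet
    rw [show r * A 0 0 - 1 = r * (A 0 1 * A 1 0 - A 0 0 * (A 1 1 - 1)) by linear_combination hdet]
    exact (dvd_sub (h₁.mul_left _) (h₂.mul_left _)).mul_left r

variable {m : R}

theorem mem_K1 {A : GL (Fin 2) R} : A ∈ K1 m ↔ m ∣ A 1 0 ∧ m ∣ A 1 1 - 1 := Iff.rfl

theorem eq_upperRight_mul_diagonal_mul_lowerLeft (A : GL (Fin 2) R) (d : Rˣ) (hd : A 1 1 = d) :
    A = upperRightHom (A 0 1 * ↑d⁻¹) * diagonalFinTwo (det A * d⁻¹) 1 * diagonalFinTwo 1 d *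
      lowerLeftHom (↑d⁻¹ * A 1 0) := by
  ext i j
  fin_cases i <;> fin_cases j <;> simp [mul_apply, Fin.sum_univ_two, det_fin_two, hd]
  linear_combination -A 0 0 * d.mul_inv

def K1Generators (m : R) : Set (GL (Fin 2) R) :=
  {A | (∃ x : R, (A : Matrix (Fin 2) (Fin 2) R) = !![1, x; 0, 1]) ∨
    (∃ y : Rˣ, (A : Matrix (Fin 2) (Fin 2) R) = !![(y : R), 0; 0, 1]) ∨
    (∃ d : R, m ∣ d - 1 ∧ (A : Matrix (Fin 2) (Fin 2) R) = !![1, 0; 0, d]) ∨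
    (∃ a : R, m ∣ a ∧ (A : Matrix (Fin 2) (Fin 2) R) = !![1, 0; a, 1])}

theorem closure_K1Generators_le : Subgroup.closure (K1Generators m) ≤ K1 m := by
  rw [Subgroup.closure_le]
  rintro A (⟨x, hA⟩ | ⟨y, hA⟩ | ⟨d, hd, hA⟩ | ⟨a, ha, hA⟩) <;> simp [mem_K1, *]

theorem K1_le_closure_K1Generators (hm : m ∈ (⊥ : Ideal R).jacobson) :
    K1 m ≤ Subgroup.closure (K1Generators m) := by
  rintro A ⟨hc, hd⟩
  obtain ⟨d, hd'⟩ := Ideal.isUnit_of_dvd_sub_one_of_mem_jacobson_bot hm hd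
  rw [eq_upperRight_mul_diagonal_mul_lowerLeft A d hd'.symm]
  refine mul_mem (mul_mem (mul_mem ?_ ?_) ?_) ?_ <;> apply Subgroup.subset_closure
  · exact Or.inl ⟨_, rfl⟩
  · exact Or.inr <| Or.inl ⟨det A * d⁻¹, rfl⟩
  · exact Or.inr <| Or.inr <| Or.inl ⟨d, hd' ▸ hd, rfl⟩
  · exact Or.inr <| Or.inr <| Or.inr ⟨_, hc.mul_left _, rfl⟩

theorem K1_eq_closure_K1Generators (hm : m ∈ (⊥ : Ideal R).jacobson) :
    K1 m = Subgroup.closure (K1Generators m) :=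
  (K1_le_closure_K1Generators hm).antisymm closure_K1Generators_le

end Matrix.GeneralLinearGroup

open Matrix.GeneralLinearGroup in
/-- The subset `K₁(pⁿ)` of `GL₂(ℤ_p)` (lower-left entry in `pⁿℤ_p`, lower-right entry
congruent to `1 mod pⁿ`) is a subgroup, generated by upper unipotent matrices,
diagonal matrices `diag(y,1)` with `y` a unit, diagonal matrices `diag(1,d)` with
`d ≡ 1 mod pⁿ`, and lower unipotent matrices with entry in `pⁿℤ_p`. -/
theorem K1_is_generated {p : ℕ} [Fact p.Prime] (n : ℕ) (hn : 1 ≤ n) :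
    ∃ H : Subgroup ((Matrix (Fin 2) (Fin 2) ℤ_[p])ˣ),
      (H : Set ((Matrix (Fin 2) (Fin 2) ℤ_[p])ˣ)) =
        {A : (Matrix (Fin 2) (Fin 2) ℤ_[p])ˣ |
          (p : ℤ_[p]) ^ n ∣ (A : Matrix (Fin 2) (Fin 2) ℤ_[p]) 1 0 ∧
          (p : ℤ_[p]) ^ n ∣ ((A : Matrix (Fin 2) (Fin 2) ℤ_[p]) 1 1 - 1)} ∧
      H = Subgroup.closure
        {A : (Matrix (Fin 2) (Fin 2) ℤ_[p])ˣ |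
          (∃ x : ℤ_[p], (A : Matrix (Fin 2) (Fin 2) ℤ_[p]) = !![1, x; 0, 1]) ∨
          (∃ y : ℤ_[p]ˣ, (A : Matrix (Fin 2) (Fin 2) ℤ_[p]) = !![(y : ℤ_[p]), 0; 0, 1]) ∨
          (∃ d : ℤ_[p], (p : ℤ_[p]) ^ n ∣ (d - 1) ∧
            (A : Matrix (Fin 2) (Fin 2) ℤ_[p]) = !![1, 0; 0, d]) ∨
          (∃ a : ℤ_[p], (p : ℤ_[p]) ^ n ∣ a ∧
            (A : Matrix (Fin 2) (Fin 2) ℤ_[p]) = !![1, 0; a, 1])} := by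
  have hpn : (p : ℤ_[p]) ^ n ∈ (⊥ : Ideal ℤ_[p]).jacobson := by
    rw [IsLocalRing.jacobson_eq_maximalIdeal ⊥ bot_ne_top, PadicInt.maximalIdeal_eq_span_p]
    exact Ideal.pow_mem_of_mem _ (Ideal.mem_span_singleton_self _) n (by omega)
  exact ⟨K1 _, rfl, K1_eq_closure_K1Generators hpn⟩
end
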